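/- Square root monotonicity bound: if A and B are symmetric positive definite q×q matrices with A^{1/2} + B^{1/2} ≥ 2 R^{1/2} in the Loewner order for a symmetric positive definite R, then ‖A^{1/2} - B^{1/2}‖ ≤ (1/2)‖R^{-1/2}‖ ‖A - B‖. In particular, for A = R + H P Hᵀ and B = R + H Q Hᵀ with P, Q symmetric positive semidefinite, ‖A^{1/2} - B^{1/2}‖ ≤ (1/2)‖R^{-1/2}‖‖H‖² ‖P - Q‖. -/

import Mathlib

/-!
Write `S = A^{1/2}`, `T = B^{1/2}` and pick a unit eigenvector `x` of `S - T` whose eigenvalue `μ`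
satisfies `|μ| = ‖S - T‖`. Since `S - T` is symmetric, `⟪x, (S² - T²) x⟫ = μ ⟪x, (S + T) x⟫`, while
`⟪x, (S + T) x⟫ ≥ 2 ⟪x, R^{1/2} x⟫ ≥ 2 / ‖R^{-1/2}‖`, the smallest eigenvalue of a positive definite
`N` being at least `‖N⁻¹‖⁻¹`. Hence `2 ‖S - T‖ / ‖R^{-1/2}‖ ≤ ‖A - B‖`.
The same identity, for an eigenvector of `A^{1/2} - R^{1/2}`, shows that `A ≥ R` implies
`A^{1/2} ≥ R^{1/2}`; this gives `A^{1/2} + B^{1/2} ≥ 2 R^{1/2}` when `A, B ≥ R`, and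
`‖H (P - Q) Hᵀ‖ ≤ ‖H‖² ‖P - Q‖` finishes the second part.
-/

open Matrix
open scoped Matrix.Norms.L2Operator

open scoped ComplexOrder in
/-- The square root of a positive semidefinite matrix (the definition removed from Mathlib,
restored with its old meaning). -/
noncomputable def Matrix.PosSemidef.sqrt {n : Type*} {𝕜 : Type*} [Fintype n] [RCLike 𝕜]
    [DecidableEq n] {A : Matrix n n 𝕜} (hA : Matrix.PosSemidef A) : Matrix n n 𝕜 :=
  hA.1.eigenvectorUnitary.1 * diagonal ((↑) ∘ (√·) ∘ hA.1.eigenvalues) *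
  (star hA.1.eigenvectorUnitary : Matrix n n 𝕜)

namespace Matrix

variable {n : Type*} [Fintype n] [DecidableEq n]

section Sqrt

variable {𝕜 : Type*} [RCLike 𝕜] {A : Matrix n n 𝕜}

open scoped ComplexOrder

lemma PosSemidef.posSemidef_sqrt (hA : A.PosSemidef) : hA.sqrt.PosSemidef := by
  refine PosSemidef.mul_mul_conjTranspose_same ?_ (hA.1.eigenvectorUnitary : Matrix n n 𝕜)
  rw [posSemidef_diagonal_iff]
  intro i
  simp [Real.sqrt_nonneg]

lemma PosSemidef.sqrt_mul_self (hA : A.PosSemidef) : hA.sqrt * hA.sqrt = A := by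
  have hdiag : (diagonal ((↑) ∘ (√·) ∘ hA.1.eigenvalues) : Matrix n n 𝕜) *
      diagonal ((↑) ∘ (√·) ∘ hA.1.eigenvalues) = diagonal ((↑) ∘ hA.1.eigenvalues) := by
    rw [diagonal_mul_diagonal]
    congr 1
    funext i
    simp [← RCLike.ofReal_mul, Real.mul_self_sqrt (hA.eigenvalues_nonneg i)]
  conv_rhs => rw [hA.1.spectral_theorem, Unitary.conjStarAlgAut_apply, ← hdiag]
  simp only [PosSemidef.sqrt, Matrix.mul_assoc]
  rw [← Matrix.mul_assoc (star _ : Matrix n n 𝕜), Unitary.coe_star_mul_self, Matrix.one_mul]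

lemma PosDef.posDef_sqrt (hA : A.PosDef) : hA.posSemidef.sqrt.PosDef := by
  have hsqrt := hA.posSemidef.posSemidef_sqrt
  rw [hsqrt.posDef_iff_isUnit]
  refine isUnit_of_mul_isUnit_left (y := hA.posSemidef.sqrt) ?_
  rw [hA.posSemidef.sqrt_mul_self]
  exact hA.isUnit

end Sqrt

lemma dotProduct_mulVec_mul_self_sub_mul_self {S T : Matrix n n ℝ} (hST : (S - T).IsHermitian)
    {μ : ℝ} {x : n → ℝ} (hx : (S - T) *ᵥ x = μ • x) :
    x ⬝ᵥ (S * S - T * T) *ᵥ x = μ * (x ⬝ᵥ (S + T) *ᵥ x) := by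
  have hsymm : x ⬝ᵥ (S - T) *ᵥ (T *ᵥ x) = (S - T) *ᵥ x ⬝ᵥ T *ᵥ x := by
    rw [dotProduct_mulVec, ← mulVec_transpose, ← conjTranspose_eq_transpose_of_trivial, hST.eq,
      dotProduct_comm]
  rw [show S * S - T * T = S * (S - T) + (S - T) * T by noncomm_ring, add_mulVec, dotProduct_add,
    ← mulVec_mulVec, ← mulVec_mulVec, hsymm, hx, add_mulVec, dotProduct_add]
  simp only [mulVec_smul, dotProduct_smul, smul_dotProduct, smul_eq_mul]
  ring

lemma abs_dotProduct_mulVec_le (D : Matrix n n ℝ) (x : EuclideanSpace ℝ n) :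
    |x.ofLp ⬝ᵥ D *ᵥ x.ofLp| ≤ ‖D‖ * ‖x‖ ^ 2 := by
  rw [← inner_toEuclideanCLM, ← l2_opNorm_toEuclideanCLM, sq, ← mul_assoc, mul_comm _ ‖x‖]
  calc _ ≤ ‖x‖ * ‖toEuclideanCLM (𝕜 := ℝ) D x‖ := abs_real_inner_le_norm _ _
    _ ≤ _ := by grw [ContinuousLinearMap.le_opNorm]

lemma IsHermitian.exists_abs_eigenvalues_eq_l2_opNorm [Nonempty n] {D : Matrix n n ℝ}
    (hD : D.IsHermitian) : ∃ i, |hD.eigenvalues i| = ‖D‖ := by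
  obtain ⟨μ, hμ, hμD⟩ :=
    (IsometricContinuousFunctionalCalculus.isGreatest_norm_spectrum (𝕜 := ℝ) D hD.isSelfAdjoint).1
  obtain ⟨i, rfl⟩ := hD.spectrum_real_eq_range_eigenvalues ▸ hμ
  exact ⟨i, hμD⟩

lemma PosDef.inv_l2_opNorm_inv_le_eigenvalues {N : Matrix n n ℝ} (hN : N.PosDef) (i : n) :
    ‖N⁻¹‖⁻¹ ≤ hN.1.eigenvalues i := by
  set v := hN.1.eigenvectorBasis i
  set μ := hN.1.eigenvalues i
  have hμ : 0 < μ := hN.eigenvalues_pos i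
  have hv : ‖v‖ = 1 := hN.1.eigenvectorBasis.orthonormal.1 i
  have hinv : N⁻¹ *ᵥ v.ofLp = μ⁻¹ • v.ofLp := by
    rw [eq_inv_smul_iff₀ hμ.ne', ← mulVec_smul, ← hN.1.mulVec_eigenvectorBasis, mulVec_mulVec,
      nonsing_inv_mul _ ((isUnit_iff_isUnit_det N).1 hN.isUnit), one_mulVec]
  have hbound := l2_opNorm_mulVec N⁻¹ v
  rw [hinv, hv, mul_one, map_smul, norm_smul] at hbound
  simp only [norm_inv, Real.norm_eq_abs, abs_of_pos hμ, PiLp.continuousLinearEquiv_symm_apply,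
    WithLp.toLp_ofLp, hv, mul_one] at hbound
  exact inv_le_of_inv_le₀ hμ hbound

lemma PosDef.inv_l2_opNorm_inv_mul_sq_le {N : Matrix n n ℝ} (hN : N.PosDef)
    (x : EuclideanSpace ℝ n) : ‖N⁻¹‖⁻¹ * ‖x‖ ^ 2 ≤ x.ofLp ⬝ᵥ N *ᵥ x.ofLp := by
  open scoped MatrixOrder in
  have hle : algebraMap ℝ (Matrix n n ℝ) ‖N⁻¹‖⁻¹ ≤ N := by
    rw [algebraMap_le_iff_le_spectrum hN.1.isSelfAdjoint, hN.1.spectrum_real_eq_range_eigenvalues]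
    rintro _ ⟨i, rfl⟩
    exact hN.inv_l2_opNorm_inv_le_eigenvalues i
  have := (le_iff.1 hle).dotProduct_mulVec_nonneg x.ofLp
  rw [star_trivial, sub_mulVec, dotProduct_sub, Algebra.algebraMap_eq_smul_one, smul_mulVec,
    one_mulVec, dotProduct_smul, smul_eq_mul] at this
  rw [← real_inner_self_eq_norm_sq, EuclideanSpace.inner_eq_star_dotProduct, star_trivial]
  linarith

theorem IsHermitian.l2_opNorm_sub_le_of_two_smul_le_add {S T N : Matrix n n ℝ}
    (hS : S.IsHermitian) (hT : T.IsHermitian) (hN : N.PosDef)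
    (h : (S + T - (2 : ℝ) • N).PosSemidef) :
    ‖S - T‖ ≤ 1 / 2 * ‖N⁻¹‖ * ‖S * S - T * T‖ := by
  cases isEmpty_or_nonempty n
  · rw [Subsingleton.elim (S - T) 0, norm_zero]
    positivity
  have hD := hS.sub hT
  obtain ⟨i, hi⟩ := hD.exists_abs_eigenvalues_eq_l2_opNorm
  set x := hD.eigenvectorBasis i
  have hx : ‖x‖ = 1 := hD.eigenvectorBasis.orthonormal.1 i
  have hNinv : 0 < ‖N⁻¹‖ := norm_pos_iff.2 hN.inv.isUnit.ne_zero
  have hsum : 2 * ‖N⁻¹‖⁻¹ ≤ x.ofLp ⬝ᵥ (S + T) *ᵥ x.ofLp := by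
    have h2 := h.dotProduct_mulVec_nonneg x.ofLp
    have hNx := hN.inv_l2_opNorm_inv_mul_sq_le x
    rw [star_trivial, sub_mulVec, dotProduct_sub, smul_mulVec, dotProduct_smul, smul_eq_mul] at h2
    rw [hx] at hNx
    linarith
  have hquad := dotProduct_mulVec_mul_self_sub_mul_self hD (hD.mulVec_eigenvectorBasis i)
  have hbound := abs_dotProduct_mulVec_le (S * S - T * T) x
  rw [hquad, hx, one_pow, mul_one, abs_mul, hi,
    abs_of_pos (hsum.trans_lt' (by positivity))] at hbound
  calc ‖S - T‖ = ‖S - T‖ * (2 * ‖N⁻¹‖⁻¹) * (‖N⁻¹‖ / 2) := by field_simp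
    _ ≤ ‖S * S - T * T‖ * (‖N⁻¹‖ / 2) := by
      gcongr
      exact (mul_le_mul_of_nonneg_left hsum (norm_nonneg _)).trans hbound
    _ = 1 / 2 * ‖N⁻¹‖ * ‖S * S - T * T‖ := by ring

theorem posSemidef_sub_of_posSemidef_mul_self_sub {S T : Matrix n n ℝ} (hS : S.IsHermitian)
    (hT : T.IsHermitian) (hST : (S + T).PosDef) (h : (S * S - T * T).PosSemidef) :
    (S - T).PosSemidef := by
  have hD := hS.sub hT
  refine hD.posSemidef_iff_eigenvalues_nonneg.2 fun i => ?_
  set x := hD.eigenvectorBasis i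
  have hx : x.ofLp ≠ 0 := by
    simpa using hD.eigenvectorBasis.orthonormal.ne_zero i
  have hquad := dotProduct_mulVec_mul_self_sub_mul_self hD (hD.mulVec_eigenvectorBasis i)
  have hnonneg := h.dotProduct_mulVec_nonneg x.ofLp
  have hpos := hST.dotProduct_mulVec_pos hx
  rw [star_trivial] at hnonneg hpos
  rw [hquad] at hnonneg
  exact nonneg_of_mul_nonneg_left hnonneg hpos

theorem posSemidef_sqrt_sub_sqrt {A R : Matrix n n ℝ} (hA : A.PosSemidef) (hR : R.PosDef)
    (h : (A - R).PosSemidef) : (hA.sqrt - hR.posSemidef.sqrt).PosSemidef := by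
  refine posSemidef_sub_of_posSemidef_mul_self_sub hA.posSemidef_sqrt.1
    hR.posSemidef.posSemidef_sqrt.1 (hR.posDef_sqrt.posSemidef_add hA.posSemidef_sqrt) ?_
  rwa [hA.sqrt_mul_self, hR.posSemidef.sqrt_mul_self]

theorem PosSemidef.l2_opNorm_sqrt_sub_sqrt_le {A B R : Matrix n n ℝ} (hA : A.PosSemidef)
    (hB : B.PosSemidef) (hR : R.PosDef)
    (h : (hA.sqrt + hB.sqrt - (2 : ℝ) • hR.posSemidef.sqrt).PosSemidef) :
    ‖hA.sqrt - hB.sqrt‖ ≤ 1 / 2 * ‖hR.posSemidef.sqrt⁻¹‖ * ‖A - B‖ := by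
  simpa only [hA.sqrt_mul_self, hB.sqrt_mul_self] using
    IsHermitian.l2_opNorm_sub_le_of_two_smul_le_add hA.posSemidef_sqrt.1 hB.posSemidef_sqrt.1
      hR.posDef_sqrt h

lemma l2_opNorm_mul_mul_conjTranspose_le {m k 𝕜 : Type*} [Fintype m] [DecidableEq m] [Fintype k]
    [DecidableEq k] [RCLike 𝕜] (H : Matrix m k 𝕜) (P : Matrix k k 𝕜) :
    ‖H * P * Hᴴ‖ ≤ ‖H‖ ^ 2 * ‖P‖ := by
  calc ‖H * P * Hᴴ‖ ≤ ‖H‖ * ‖P‖ * ‖Hᴴ‖ := by grw [l2_opNorm_mul, l2_opNorm_mul]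
    _ = ‖H‖ ^ 2 * ‖P‖ := by rw [l2_opNorm_conjTranspose]; ring

end Matrix

/-- Square root monotonicity bound: if `A^{1/2} + B^{1/2} ≥ 2 R^{1/2}` in the Loewner
order, then `‖A^{1/2} - B^{1/2}‖ ≤ (1/2) ‖R^{-1/2}‖ ‖A - B‖`; in particular, for
`A = R + H P Hᵀ` and `B = R + H Q Hᵀ` with `P, Q` positive semidefinite,
`‖A^{1/2} - B^{1/2}‖ ≤ (1/2) ‖R^{-1/2}‖ ‖H‖² ‖P - Q‖`. -/
theorem stmt_15 {d q : ℕ} (R : Matrix (Fin q) (Fin q) ℝ) (hR : R.PosDef) :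
    (∀ (A B : Matrix (Fin q) (Fin q) ℝ) (hA : A.PosDef) (hB : B.PosDef),
        (hA.posSemidef.sqrt + hB.posSemidef.sqrt -
            (2 : ℝ) • hR.posSemidef.sqrt).PosSemidef →
        ‖hA.posSemidef.sqrt - hB.posSemidef.sqrt‖ ≤
          (1 / 2) * ‖(hR.posSemidef.sqrt)⁻¹‖ * ‖A - B‖) ∧
      ∀ (H : Matrix (Fin q) (Fin d) ℝ) (P Q : Matrix (Fin d) (Fin d) ℝ),
        P.PosSemidef → Q.PosSemidef →
        ∀ (hA : (R + H * P * Hᵀ).PosDef) (hB : (R + H * Q * Hᵀ).PosDef),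
        ‖hA.posSemidef.sqrt - hB.posSemidef.sqrt‖ ≤
          (1 / 2) * ‖(hR.posSemidef.sqrt)⁻¹‖ * ‖H‖ ^ 2 * ‖P - Q‖ := by
  refine ⟨fun A B hA hB => hA.posSemidef.l2_opNorm_sqrt_sub_sqrt_le hB.posSemidef hR,
    fun H P Q hP hQ hA hB => ?_⟩
  have hHt : Hᴴ = Hᵀ := conjTranspose_eq_transpose_of_trivial H
  have hAR := posSemidef_sqrt_sub_sqrt hA.posSemidef hR
    (by rw [add_sub_cancel_left, ← hHt]; exact hP.mul_mul_conjTranspose_same H)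
  have hBR := posSemidef_sqrt_sub_sqrt hB.posSemidef hR
    (by rw [add_sub_cancel_left, ← hHt]; exact hQ.mul_mul_conjTranspose_same H)
  have hsum : (hA.posSemidef.sqrt + hB.posSemidef.sqrt -
      (2 : ℝ) • hR.posSemidef.sqrt).PosSemidef := by
    convert hAR.add hBR using 1
    module
  have hdiff : R + H * P * Hᵀ - (R + H * Q * Hᵀ) = H * (P - Q) * Hᴴ := by
    rw [hHt, Matrix.mul_sub, Matrix.sub_mul]
    abel
  calc ‖hA.posSemidef.sqrt - hB.posSemidef.sqrt‖
      ≤ 1 / 2 * ‖(hR.posSemidef.sqrt)⁻¹‖ * ‖H * (P - Q) * Hᴴ‖ := by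
        rw [← hdiff]
        exact hA.posSemidef.l2_opNorm_sqrt_sub_sqrt_le hB.posSemidef hR hsum
    _ ≤ 1 / 2 * ‖(hR.posSemidef.sqrt)⁻¹‖ * (‖H‖ ^ 2 * ‖P - Q‖) := by
        gcongr
        exact l2_opNorm_mul_mul_conjTranspose_le H (P - Q)
    _ = 1 / 2 * ‖(hR.posSemidef.sqrt)⁻¹‖ * ‖H‖ ^ 2 * ‖P - Q‖ := by ring
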